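/- Let K, C ⊆ ℝⁿ be closed and let x ∈ ∂K ∩ ∂C satisfy Assumption 3 at x, namely: T_{∂K}(x) = T^a_{∂K}(x), T_C(x) = T^a_C(x), and there exist a neighborhood N(x) of x, c > 0 and α ∈ [0,1) such that for all x₁ ∈ (∂K \ C) ∩ N(x) and x₂ ∈ (∂C \ ∂K) ∩ N(x) there exist v₁ ∈ T_{∂K}(x₁) and v₂ ∈ T_C(x₂) with |(v₁,v₂)| ≤ c·|x₁ − x₂| and x₂ − x₁ ∈ v₁ − v₂ + α·|x₁ − x₂|·𝔹. Then T^a_{∂K ∩ C}(x) = T_{∂K ∩ C}(x) = T_{∂K}(x) ∩ T_C(x). -/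

import Mathlib

open MeasureTheory Filter Topology Set
open scoped RealInnerProductSpace

/-- Euclidean space ℝⁿ. -/
abbrev Euc (n : ℕ) := EuclideanSpace ℝ (Fin n)

variable {E : Type*} [NormedAddCommGroup E] [InnerProductSpace ℝ E]

/-- The contingent (Bouligand) cone to `S` at `x`:
`v` belongs to it iff there are sequences `tᵢ → 0⁺` and `vᵢ → v` with `x + tᵢ • vᵢ ∈ S`. -/
def contingentCone (S : Set E) (x : E) : Set E :=
  {v | ∃ t : ℕ → ℝ, ∃ w : ℕ → E,
    (∀ i, 0 < t i) ∧ Tendsto t atTop (𝓝 0) ∧ Tendsto w atTop (𝓝 v) ∧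
    ∀ i, x + t i • w i ∈ S}

/-- The adjacent cone to `S` at `x`:
`v` belongs to it iff for every sequence `tᵢ → 0⁺` there is `vᵢ → v` with `x + tᵢ • vᵢ ∈ S`. -/
def adjacentCone (S : Set E) (x : E) : Set E :=
  {v | ∀ t : ℕ → ℝ, (∀ i, 0 < t i) → Tendsto t atTop (𝓝 0) →
    ∃ w : ℕ → E, Tendsto w atTop (𝓝 v) ∧ ∀ i, x + t i • w i ∈ S}

/-- The Dubovitskiy cone to `S` at `x`. -/
def dubovitskiyCone (S : Set E) (x : E) : Set E :=
  {v | ∀ t : ℕ → ℝ, ∀ w : ℕ → E, (∀ i, 0 < t i) → Tendsto t atTop (𝓝 0) →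
    Tendsto w atTop (𝓝 v) → ∀ᶠ i in atTop, x + t i • w i ∈ interior S}

/-- Lower semicontinuity of a set-valued map at a point along a filter `l`. -/
def SVLowerSemicontinuousAt (F : E → Set E) (l : Filter E) (x : E) : Prop :=
  ∀ U : Set E, IsOpen U → (F x ∩ U).Nonempty → ∀ᶠ y in l, (F y ∩ U).Nonempty

/-- Upper semicontinuity of a set-valued map at a point along a filter `l`. -/
def SVUpperSemicontinuousAt (F : E → Set E) (l : Filter E) (x : E) : Prop :=
  ∀ U : Set E, IsOpen U → F x ⊆ U → ∀ᶠ y in l, F y ⊆ U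

/-- Continuity (lower and upper semicontinuity) of a set-valued map at `x` along `l`. -/
def SVContinuousAt (F : E → Set E) (l : Filter E) (x : E) : Prop :=
  SVLowerSemicontinuousAt F l x ∧ SVUpperSemicontinuousAt F l x

/-- Continuity of a set-valued map. -/
def SVContinuous (F : E → Set E) : Prop := ∀ x, SVContinuousAt F (𝓝 x) x

/-- Local boundedness of a set-valued map. -/
def SVLocallyBounded (F : E → Set E) : Prop :=
  ∀ x : E, ∃ N ∈ 𝓝 x, ∃ M : ℝ, ∀ y ∈ N, ∀ v ∈ F y, ‖v‖ ≤ M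

/-- One-sided local Lipschitz continuity of a set-valued map. -/
def OneSidedLocallyLipschitz (F : E → Set E) : Prop :=
  ∀ N : Set E, N.Nonempty → IsCompact N → ∃ k > 0, ∀ x₁ ∈ N, ∀ x₂ ∈ N,
    ∀ w₁ ∈ F x₁, ∃ w₂ ∈ F x₂, ⟪x₁ - x₂, w₁⟫ ≤ ⟪x₁ - x₂, w₂⟫ + k * ‖x₁ - x₂‖ ^ 2

/-- The standing assumption (SA): `C` closed; `F x` nonempty, closed, convex on `C`;
`F` continuous and one-sided locally Lipschitz. -/
structure StandingAssumption (F : E → Set E) (C : Set E) : Prop where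
  closed_C : IsClosed C
  nonempty_images : ∀ x ∈ C, (F x).Nonempty
  closed_images : ∀ x ∈ C, IsClosed (F x)
  convex_images : ∀ x ∈ C, Convex ℝ (F x)
  continuous : SVContinuous F
  osLipschitz : OneSidedLocallyLipschitz F

/-- Admissible solution domains: `[0,T]` with `T ≥ 0`, or `[0,T)` with `T ∈ (0,∞]`. -/
def IsSolDomain (D : Set ℝ) : Prop :=
  (∃ T : ℝ, 0 ≤ T ∧ D = Icc 0 T) ∨ (∃ T : ℝ, 0 < T ∧ D = Ico 0 T) ∨ D = Ici 0

/-- `φ` is a solution of the constrained differential inclusion `ẋ ∈ F(x)`, `x ∈ C`,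
on the domain `D`: it stays in `C` and is a locally absolutely continuous arc whose
derivative is an integrable selection of `F ∘ φ` almost everywhere. -/
def IsSolution (F : E → Set E) (C : Set E) (D : Set ℝ) (φ : ℝ → E) : Prop :=
  IsSolDomain D ∧ (∀ t ∈ D, φ t ∈ C) ∧
  ∃ g : ℝ → E,
    (∀ᵐ t ∂(volume.restrict D), g t ∈ F (φ t)) ∧
    ∀ t ∈ D, IntervalIntegrable g volume 0 t ∧ φ t = φ 0 + ∫ s in (0:ℝ)..t, g s

/-- Forward invariance of `K` for the constrained differential inclusion. -/
def ForwardInvariant (F : E → Set E) (C K : Set E) : Prop :=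
  ∀ D : Set ℝ, ∀ φ : ℝ → E, IsSolution F C D φ → φ 0 ∈ K → ∀ t ∈ D, φ t ∈ K

/-- The set 𝒫 of critical points: points of `∂K ∩ ∂C` every neighborhood of which
meets `C \ K`. -/
def critSet (K C : Set E) : Set E :=
  {x | x ∈ frontier K ∩ frontier C ∧ ∀ N ∈ 𝓝 x, (N ∩ (C \ K)).Nonempty}

/-- The set of initial speeds `F_φ(x)` of an arc `φ` at `x`. -/
def initialSpeeds (φ : ℝ → E) (x : E) : Set E :=
  {v | ∃ t : ℕ → ℝ, (∀ i, 0 < t i) ∧ Tendsto t atTop (𝓝 0) ∧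
    Tendsto (fun i => (t i)⁻¹ • (φ (t i) - x)) atTop (𝓝 v)}

/-- The metric projection of `y` onto `S`. -/
def projSet (S : Set E) (y : E) : Set E := {z ∈ S | dist y z = Metric.infDist y S}

/-- `φ` leaves `K` immediately: for some `T > 0`, `φ(t) ∈ C \ K` on `(0,T]`. -/
def LeavesImmediately (K C : Set E) (D : Set ℝ) (φ : ℝ → E) : Prop :=
  ∃ T > 0, Ioc 0 T ⊆ D ∧ ∀ t ∈ Ioc 0 T, φ t ∈ C \ K

/-- Property (★): for some `T > 0`, `Proj_{∂K}(φ(t)) ∩ int C ≠ ∅` on `(0,T]`. -/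
def PropStar (K C : Set E) (D : Set ℝ) (φ : ℝ → E) : Prop :=
  ∃ T > 0, Ioc 0 T ⊆ D ∧
    ∀ t ∈ Ioc 0 T, (projSet (frontier K) (φ t) ∩ interior C).Nonempty

/-- Euclidean norm of the concatenated vector `(v₁, v₂) ∈ ℝ²ⁿ`. -/
noncomputable def pairNorm (v₁ v₂ : E) : ℝ := Real.sqrt (‖v₁‖ ^ 2 + ‖v₂‖ ^ 2)

/-- Assumption 1: `F(x) ⊆ T_K(x)` on 𝒫. -/
def Assumption1 (F : E → Set E) (K C : Set E) : Prop :=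
  ∀ x ∈ critSet K C, F x ⊆ contingentCone K x

/-- Assumption 2: `F(x) ∩ T_{∂K ∩ ∂C}(x) = ∅` on 𝒫. -/
def Assumption2 (F : E → Set E) (K C : Set E) : Prop :=
  ∀ x ∈ critSet K C, F x ∩ contingentCone (frontier K ∩ frontier C) x = ∅

/-- Assumption 3 (transversality) at a point `x`. -/
def Assumption3At (K C : Set E) (x : E) : Prop :=
  contingentCone (frontier K) x = adjacentCone (frontier K) x ∧
  contingentCone C x = adjacentCone C x ∧
  ∃ N ∈ 𝓝 x, ∃ c > 0, ∃ α ∈ Ico (0:ℝ) 1,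
    ∀ x₁ ∈ (frontier K \ C) ∩ N, ∀ x₂ ∈ (frontier C \ frontier K) ∩ N,
      ∃ v₁ ∈ contingentCone (frontier K) x₁, ∃ v₂ ∈ contingentCone C x₂,
        pairNorm v₁ v₂ ≤ c * ‖x₁ - x₂‖ ∧ ‖(x₂ - x₁) - (v₁ - v₂)‖ ≤ α * ‖x₁ - x₂‖

/-- Assumption 3 (transversality) on 𝒫. -/
def Assumption3 (K C : Set E) : Prop := ∀ x ∈ critSet K C, Assumption3At K C x

/-- The transversality condition (◇) for a pair of sets at `x₀`. -/
def TransversalAt (K₁ K₂ : Set E) (x₀ : E) : Prop :=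
  ∃ N ∈ 𝓝 x₀, ∃ c > 0, ∃ α ∈ Ico (0:ℝ) 1,
    ∀ x₁ ∈ (frontier K₁ \ K₂) ∩ N, ∀ x₂ ∈ (frontier K₂ \ K₁) ∩ N,
      ∃ v₁ ∈ contingentCone K₁ x₁, ∃ v₂ ∈ contingentCone K₂ x₂,
        pairNorm v₁ v₂ ≤ c * ‖x₁ - x₂‖ ∧ ‖(x₂ - x₁) - (v₁ - v₂)‖ ≤ α * ‖x₁ - x₂‖

/-!
Near `x`, transversality makes the pair `(∂K, C)` linearly regular: points `a ∈ ∂K` and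
`b ∈ C` close to `x` can be replaced by some `z ∈ ∂K ∩ C` with `‖z - a‖ ≤ κ ‖a - b‖`.
Given `v` adjacent to both sets, along any `tᵢ → 0⁺` there are `x + tᵢ wᵢ ∈ ∂K` and
`x + tᵢ uᵢ ∈ C` with `wᵢ, uᵢ → v`; the correction costs `κ tᵢ ‖wᵢ - uᵢ‖ = o(tᵢ)`, so `v` is
adjacent to `∂K ∩ C`, and the equality of the contingent and adjacent cones of `∂K` and `C`
closes the chain of inclusions.

Linear regularity comes from an Ekeland-type argument: minimize
`‖a' - b'‖ + σ (‖a' - a‖ + ‖b' - b‖)` over pairs in a compact ball. At a minimizer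
`(a₁, b₁)` with `a₁ ≠ b₁`, the cases `a₁ ∈ C`, `b₁ ∈ ∂K`, `b₁ ∈ int C` are excluded directly
since `σ < 1`; otherwise transversality supplies tangent vectors `v₁, v₂` for which the
first-order conditions `⟪a₁ - b₁, v₁⟫ ≥ -σ ‖a₁ - b₁‖ ‖v₁‖`, `⟪b₁ - a₁, v₂⟫ ≥ -σ ‖a₁ - b₁‖ ‖v₂‖`
contradict `⟪a₁ - b₁, v₁ - v₂⟫ ≤ -(1 - α) ‖a₁ - b₁‖²` once `2σc < 1 - α`.
-/

lemma adjacentCone_subset_contingentCone (S : Set E) (x : E) :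
    adjacentCone S x ⊆ contingentCone S x := fun v hv => by
  obtain ⟨w, hw, hmem⟩ := hv (fun i : ℕ => 1 / (i + 1)) (fun i => by positivity)
    tendsto_one_div_add_atTop_nhds_zero_nat
  exact ⟨_, w, fun i => by positivity, tendsto_one_div_add_atTop_nhds_zero_nat, hw, hmem⟩

lemma contingentCone_mono {S T : Set E} (h : S ⊆ T) (x : E) :
    contingentCone S x ⊆ contingentCone T x := by
  rintro v ⟨t, w, ht, ht0, hw, hmem⟩
  exact ⟨t, w, ht, ht0, hw, fun i => h (hmem i)⟩

lemma mem_adjacentCone_of_eventually {S : Set E} {x v : E} (hx : x ∈ S)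
    (h : ∀ t : ℕ → ℝ, (∀ i, 0 < t i) → Tendsto t atTop (𝓝 0) →
      ∃ w : ℕ → E, Tendsto w atTop (𝓝 v) ∧ ∀ᶠ i in atTop, x + t i • w i ∈ S) :
    v ∈ adjacentCone S x := by
  intro t ht ht0
  obtain ⟨w, hw, hmem⟩ := h t ht ht0
  obtain ⟨N, hN⟩ := eventually_atTop.1 hmem
  refine ⟨fun i => if N ≤ i then w i else 0, hw.congr' ?_, fun i => ?_⟩
  · filter_upwards [eventually_ge_atTop N] with i hi
    simp [hi]
  · dsimp only
    split_ifs with hi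
    exacts [hN i hi, by simpa using hx]

def LinearlyRegularAt (A B : Set E) (x : E) : Prop :=
  ∃ κ : ℝ, ∀ᶠ p in 𝓝 (x, x), p.1 ∈ A → p.2 ∈ B → ∃ z ∈ A ∩ B, ‖z - p.1‖ ≤ κ * ‖p.1 - p.2‖

lemma LinearlyRegularAt.inter_adjacentCone_subset {A B : Set E} {x : E}
    (h : LinearlyRegularAt A B x) (hx : x ∈ A ∩ B) :
    adjacentCone A x ∩ adjacentCone B x ⊆ adjacentCone (A ∩ B) x := by
  rintro v ⟨hvA, hvB⟩
  obtain ⟨κ, hκ⟩ := h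
  refine mem_adjacentCone_of_eventually hx fun t ht ht0 => ?_
  obtain ⟨w, hw, hwA⟩ := hvA t ht ht0
  obtain ⟨u, hu, huB⟩ := hvB t ht ht0
  have hnear : ∀ {w : ℕ → E}, Tendsto w atTop (𝓝 v) →
      Tendsto (fun i => x + t i • w i) atTop (𝓝 x) := fun hw => by
    simpa using tendsto_const_nhds.add (ht0.smul hw)
  have hdist : ∀ i, ‖(x + t i • w i) - (x + t i • u i)‖ = t i * ‖w i - u i‖ := fun i => by
    rw [add_sub_add_left_eq_sub, ← smul_sub, norm_smul, Real.norm_of_nonneg (ht i).le]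
  let z : ℕ → E := fun i => Classical.epsilon fun z =>
    z ∈ A ∩ B ∧ ‖z - (x + t i • w i)‖ ≤ κ * ‖(x + t i • w i) - (x + t i • u i)‖
  have hz : ∀ᶠ i in atTop, z i ∈ A ∩ B ∧ ‖z i - (x + t i • w i)‖ ≤ κ * (t i * ‖w i - u i‖) :=
    ((hnear hw).prodMk_nhds (hnear hu)).eventually hκ |>.mono fun i hi =>
      hdist i ▸ Classical.epsilon_spec (hi (hwA i) (huB i))
  have hcorr : Tendsto (fun i => (t i)⁻¹ • (z i - x) - w i) atTop (𝓝 0) := by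
    refine squeeze_zero_norm' (hz.mono fun i hi => ?_)
      (by simpa using (hw.sub hu).norm.const_mul κ)
    have hti := (ht i).ne'
    have hsplit : (t i)⁻¹ • (z i - x) - w i = (t i)⁻¹ • (z i - (x + t i • w i)) := by
      rw [smul_sub _ (z i) (x + _), smul_add, smul_smul, inv_mul_cancel₀ hti, one_smul,
        smul_sub]
      abel
    calc ‖(t i)⁻¹ • (z i - x) - w i‖ = (t i)⁻¹ * ‖z i - (x + t i • w i)‖ := by
          rw [hsplit, norm_smul_of_nonneg (inv_nonneg.2 (ht i).le)]
      _ ≤ (t i)⁻¹ * (κ * (t i * ‖w i - u i‖)) :=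
          mul_le_mul_of_nonneg_left hi.2 (inv_nonneg.2 (ht i).le)
      _ = κ * ‖w i - u i‖ := by field_simp
  refine ⟨fun i => (t i)⁻¹ • (z i - x), by simpa using hcorr.add hw, hz.mono fun i hi => ?_⟩
  rw [smul_smul, mul_inv_cancel₀ (ht i).ne', one_smul, add_sub_cancel]
  exact hi.1

lemma norm_le_pairNorm_left {F : Type*} [NormedAddCommGroup F] (v₁ v₂ : F) :
    ‖v₁‖ ≤ pairNorm v₁ v₂ :=
  Real.le_sqrt_of_sq_le (le_add_of_nonneg_right (sq_nonneg _))

lemma norm_le_pairNorm_right {F : Type*} [NormedAddCommGroup F] (v₁ v₂ : F) :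
    ‖v₂‖ ≤ pairNorm v₁ v₂ :=
  Real.le_sqrt_of_sq_le (le_add_of_nonneg_left (sq_nonneg _))

lemma real_inner_le_of_norm_neg_sub_le {d u : E} {α : ℝ} (h : ‖-d - u‖ ≤ α * ‖d‖) :
    ⟪d, u⟫ ≤ -(1 - α) * ‖d‖ ^ 2 := by
  have hsplit : ⟪d, u⟫ = -‖d‖ ^ 2 - ⟪d, -d - u⟫ := by
    rw [inner_sub_right, inner_neg_right, real_inner_self_eq_norm_sq]
    ring
  have hcs : -⟪d, -d - u⟫ ≤ ‖d‖ * (α * ‖d‖) :=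
    (neg_le_abs _).trans ((abs_real_inner_le_norm _ _).trans
      (mul_le_mul_of_nonneg_left h (norm_nonneg _)))
  nlinarith

/-- Squaring `‖d‖ - σ s ‖w‖ ≤ ‖d + s • w‖` and dividing by `s`. -/
lemma neg_mul_le_two_inner_add (d w : E) {s σ : ℝ} (hs : 0 < s) (hσ : 0 ≤ σ)
    (h : ‖d‖ ≤ ‖d + s • w‖ + σ * (s * ‖w‖)) :
    -(σ * ‖w‖ * (2 * ‖d‖ + s * ‖w‖)) ≤ 2 * ⟪d, w⟫ + s * ‖w‖ ^ 2 := by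
  have hsw : ‖s • w‖ = s * ‖w‖ := by rw [norm_smul, Real.norm_of_nonneg hs.le]
  have hsq : ‖d + s • w‖ ^ 2 = ‖d‖ ^ 2 + s * (2 * ⟪d, w⟫ + s * ‖w‖ ^ 2) := by
    rw [norm_add_sq_real, real_inner_smul_right, hsw]
    ring
  have hupper : ‖d + s • w‖ ≤ ‖d‖ + s * ‖w‖ := hsw ▸ norm_add_le d (s • w)
  have hmul : -(σ * (s * ‖w‖)) * (‖d + s • w‖ + ‖d‖) ≤ ‖d + s • w‖ ^ 2 - ‖d‖ ^ 2 := by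
    have := mul_le_mul_of_nonneg_right (show -(σ * (s * ‖w‖)) ≤ ‖d + s • w‖ - ‖d‖ by linarith)
      (add_nonneg (norm_nonneg (d + s • w)) (norm_nonneg d))
    nlinarith
  have hσw : 0 ≤ σ * ‖w‖ := by positivity
  rw [hsq] at hmul
  nlinarith [mul_le_mul_of_nonneg_left hupper hσw]

/-- First-order condition at a point `y` of `S` from which moving inside `S` cannot
shorten `d` faster than at rate `σ`. -/
lemma neg_mul_le_inner_of_tendsto {S : Set E} {y d v : E} {σ : ℝ} (hσ : 0 ≤ σ)
    (hS : ∀ᶠ y' in 𝓝 y, y' ∈ S → ‖d‖ ≤ ‖d + (y' - y)‖ + σ * ‖y' - y‖)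
    {t : ℕ → ℝ} {w : ℕ → E} (ht : ∀ i, 0 < t i) (ht0 : Tendsto t atTop (𝓝 0))
    (hw : Tendsto w atTop (𝓝 v)) (hmem : ∀ᶠ i in atTop, y + t i • w i ∈ S) :
    -(σ * ‖d‖ * ‖v‖) ≤ ⟪d, v⟫ := by
  have hy : Tendsto (fun i => y + t i • w i) atTop (𝓝 y) := by
    simpa using tendsto_const_nhds.add (ht0.smul hw)
  have hstep : ∀ᶠ i in atTop,
      -(σ * ‖w i‖ * (2 * ‖d‖ + t i * ‖w i‖)) ≤ 2 * ⟪d, w i⟫ + t i * ‖w i‖ ^ 2 := by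
    filter_upwards [hy.eventually hS, hmem] with i hi hiS
    refine neg_mul_le_two_inner_add d (w i) (ht i) hσ ?_
    simpa [norm_smul, Real.norm_of_nonneg (ht i).le] using hi hiS
  have hlow : Tendsto (fun i => -(σ * ‖w i‖ * (2 * ‖d‖ + t i * ‖w i‖))) atTop
      (𝓝 (-(σ * ‖v‖ * (2 * ‖d‖ + 0 * ‖v‖)))) :=
    ((tendsto_const_nhds.mul hw.norm).mul (tendsto_const_nhds.add (ht0.mul hw.norm))).neg
  have hhigh : Tendsto (fun i => 2 * ⟪d, w i⟫ + t i * ‖w i‖ ^ 2) atTop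
      (𝓝 (2 * ⟪d, v⟫ + 0 * ‖v‖ ^ 2)) :=
    (tendsto_const_nhds.mul (tendsto_const_nhds.inner hw)).add (ht0.mul (hw.norm.pow 2))
  have := le_of_tendsto_of_tendsto hlow hhigh hstep
  linarith

lemma neg_mul_le_inner_of_mem_contingentCone {S : Set E} {y d v : E} {σ : ℝ} (hσ : 0 ≤ σ)
    (hS : ∀ᶠ y' in 𝓝 y, y' ∈ S → ‖d‖ ≤ ‖d + (y' - y)‖ + σ * ‖y' - y‖)
    (hv : v ∈ contingentCone S y) : -(σ * ‖d‖ * ‖v‖) ≤ ⟪d, v⟫ := by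
  obtain ⟨t, w, ht, ht0, hw, hmem⟩ := hv
  exact neg_mul_le_inner_of_tendsto hσ hS ht ht0 hw (Eventually.of_forall hmem)

/-- `(a₁, b₁)` minimizes `(a, b) ↦ ‖a - b‖ + σ (‖a - a₁‖ + ‖b - b₁‖)` over
`(A ∩ U) × (B ∩ U)`, as the point produced by Ekeland's variational principle does. -/
structure IsEkelandPair {F : Type*} [NormedAddCommGroup F] (A B U : Set F) (σ : ℝ)
    (a₁ b₁ : F) : Prop where
  fst_mem : a₁ ∈ A
  snd_mem : b₁ ∈ B
  nhds_fst : U ∈ 𝓝 a₁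
  nhds_snd : U ∈ 𝓝 b₁
  le : ∀ a ∈ A ∩ U, ∀ b ∈ B ∩ U, ‖a₁ - b₁‖ ≤ ‖a - b‖ + σ * (‖a - a₁‖ + ‖b - b₁‖)

namespace IsEkelandPair

section NormedGroup

variable {F : Type*} [NormedAddCommGroup F] {A B U : Set F} {σ : ℝ} {a₁ b₁ : F}

lemma eq_of_fst_mem (h : IsEkelandPair A B U σ a₁ b₁) (hσ : σ < 1) (ha : a₁ ∈ B) :
    a₁ = b₁ := by
  have hU := mem_of_mem_nhds h.nhds_fst
  have := h.le a₁ ⟨h.fst_mem, hU⟩ a₁ ⟨ha, hU⟩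
  rw [sub_self, norm_zero, zero_add, zero_add] at this
  exact sub_eq_zero.1 (norm_eq_zero.1 (le_antisymm (by nlinarith) (norm_nonneg _)))

lemma eq_of_snd_mem (h : IsEkelandPair A B U σ a₁ b₁) (hσ : σ < 1) (hb : b₁ ∈ A) :
    a₁ = b₁ := by
  have hU := mem_of_mem_nhds h.nhds_snd
  have := h.le b₁ ⟨hb, hU⟩ b₁ ⟨h.snd_mem, hU⟩
  rw [sub_self, norm_zero, zero_add, add_zero, norm_sub_rev b₁] at this
  exact sub_eq_zero.1 (norm_eq_zero.1 (le_antisymm (by nlinarith) (norm_nonneg _)))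

lemma eventually_fst (h : IsEkelandPair A B U σ a₁ b₁) :
    ∀ᶠ a in 𝓝 a₁, a ∈ A → ‖a₁ - b₁‖ ≤ ‖(a₁ - b₁) + (a - a₁)‖ + σ * ‖a - a₁‖ := by
  filter_upwards [h.nhds_fst] with a haU haA
  have := h.le a ⟨haA, haU⟩ b₁ ⟨h.snd_mem, mem_of_mem_nhds h.nhds_snd⟩
  rw [sub_self, norm_zero, add_zero] at this
  rwa [add_comm (a₁ - b₁), sub_add_sub_cancel]

lemma eventually_snd (h : IsEkelandPair A B U σ a₁ b₁) :
    ∀ᶠ b in 𝓝 b₁, b ∈ B → ‖b₁ - a₁‖ ≤ ‖(b₁ - a₁) + (b - b₁)‖ + σ * ‖b - b₁‖ := by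
  filter_upwards [h.nhds_snd] with b hbU hbB
  have := h.le a₁ ⟨h.fst_mem, mem_of_mem_nhds h.nhds_fst⟩ b ⟨hbB, hbU⟩
  rw [sub_self, norm_zero, zero_add, norm_sub_rev a₁ b, norm_sub_rev a₁ b₁] at this
  rwa [add_comm (b₁ - a₁), sub_add_sub_cancel]

end NormedGroup

variable {A B U : Set E} {σ : ℝ} {a₁ b₁ : E}

lemma eq_of_mem_interior (h : IsEkelandPair A B U σ a₁ b₁) (hσ0 : 0 ≤ σ) (hσ1 : σ < 1)
    (hb : b₁ ∈ interior B) : a₁ = b₁ := by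
  have ht : ∀ i : ℕ, (0 : ℝ) < 1 / (i + 1) := fun i => by positivity
  have hmove : ∀ᶠ i : ℕ in atTop, b₁ + (1 / (i + 1) : ℝ) • (a₁ - b₁) ∈ B := by
    have : Tendsto (fun i : ℕ => b₁ + (1 / (i + 1) : ℝ) • (a₁ - b₁)) atTop (𝓝 b₁) := by
      simpa using tendsto_const_nhds.add
        ((tendsto_one_div_add_atTop_nhds_zero_nat (𝕜 := ℝ)).smul_const (a₁ - b₁))
    exact this.eventually (mem_interior_iff_mem_nhds.1 hb)
  have := neg_mul_le_inner_of_tendsto hσ0 h.eventually_snd ht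
    tendsto_one_div_add_atTop_nhds_zero_nat tendsto_const_nhds hmove
  rw [← neg_sub a₁ b₁, inner_neg_left, real_inner_self_eq_norm_sq, norm_neg] at this
  by_contra hne
  have hd : 0 < ‖a₁ - b₁‖ := norm_pos_iff.2 (sub_ne_zero.2 hne)
  nlinarith [mul_pos (sub_pos.2 hσ1) (mul_pos hd hd)]

lemma eq_of_mem_contingentCone (h : IsEkelandPair A B U σ a₁ b₁) (hσ : 0 ≤ σ)
    {c α : ℝ} (hσc : 2 * σ * c < 1 - α) {v₁ v₂ : E}
    (hv₁ : v₁ ∈ contingentCone A a₁) (hv₂ : v₂ ∈ contingentCone B b₁)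
    (hc : pairNorm v₁ v₂ ≤ c * ‖a₁ - b₁‖) (hα : ‖(b₁ - a₁) - (v₁ - v₂)‖ ≤ α * ‖a₁ - b₁‖) :
    a₁ = b₁ := by
  have h₁ := neg_mul_le_inner_of_mem_contingentCone hσ h.eventually_fst hv₁
  have h₂ := neg_mul_le_inner_of_mem_contingentCone hσ h.eventually_snd hv₂
  have h₃ := real_inner_le_of_norm_neg_sub_le (d := a₁ - b₁) (u := v₁ - v₂)
    (by rwa [neg_sub])
  rw [inner_sub_right] at h₃
  rw [norm_sub_rev, ← neg_sub a₁ b₁, inner_neg_left] at h₂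
  have hv₁c := (norm_le_pairNorm_left v₁ v₂).trans hc
  have hv₂c := (norm_le_pairNorm_right v₁ v₂).trans hc
  by_contra hne
  have hd : 0 < ‖a₁ - b₁‖ := norm_pos_iff.2 (sub_ne_zero.2 hne)
  have hσv₁ := mul_le_mul_of_nonneg_left hv₁c (mul_nonneg hσ hd.le)
  have hσv₂ := mul_le_mul_of_nonneg_left hv₂c (mul_nonneg hσ hd.le)
  nlinarith [mul_pos (sub_pos.2 hσc) (mul_pos hd hd)]

lemma eq_of_transversal (h : IsEkelandPair A B U σ a₁ b₁) (hσ0 : 0 ≤ σ) (hσ1 : σ < 1)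
    {c α : ℝ} (hσc : 2 * σ * c < 1 - α)
    (htr : a₁ ∈ A \ B → b₁ ∈ frontier B \ A →
      ∃ v₁ ∈ contingentCone A a₁, ∃ v₂ ∈ contingentCone B b₁,
        pairNorm v₁ v₂ ≤ c * ‖a₁ - b₁‖ ∧ ‖(b₁ - a₁) - (v₁ - v₂)‖ ≤ α * ‖a₁ - b₁‖) :
    a₁ = b₁ := by
  by_cases haB : a₁ ∈ B
  · exact h.eq_of_fst_mem hσ1 haB
  by_cases hbA : b₁ ∈ A
  · exact h.eq_of_snd_mem hσ1 hbA
  by_cases hbB : b₁ ∈ interior B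
  · exact h.eq_of_mem_interior hσ0 hσ1 hbB
  obtain ⟨v₁, hv₁, v₂, hv₂, hc, hα⟩ :=
    htr ⟨h.fst_mem, haB⟩ ⟨⟨subset_closure h.snd_mem, hbB⟩, hbA⟩
  exact h.eq_of_mem_contingentCone hσ0 hσc hv₁ hv₂ hc hα

end IsEkelandPair

lemma exists_ekeland_pair_of_isCompact {F : Type*} [NormedAddCommGroup F] {A B K₀ : Set F}
    (hA : IsClosed A) (hB : IsClosed B) (hK₀ : IsCompact K₀) {σ : ℝ} (hσ : 0 ≤ σ) {a b : F}
    (ha : a ∈ A ∩ K₀) (hb : b ∈ B ∩ K₀) :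
    ∃ a₁ ∈ A ∩ K₀, ∃ b₁ ∈ B ∩ K₀, ‖a₁ - b₁‖ + σ * (‖a₁ - a‖ + ‖b₁ - b‖) ≤ ‖a - b‖ ∧
      ∀ a' ∈ A ∩ K₀, ∀ b' ∈ B ∩ K₀,
        ‖a₁ - b₁‖ ≤ ‖a' - b'‖ + σ * (‖a' - a₁‖ + ‖b' - b₁‖) := by
  have hcpt : IsCompact ((A ∩ K₀) ×ˢ (B ∩ K₀)) :=
    (hK₀.inter_left hA).prod (hK₀.inter_left hB)
  obtain ⟨⟨a₁, b₁⟩, ⟨ha₁, hb₁⟩, hmin⟩ := hcpt.exists_isMinOn ⟨(a, b), Set.mk_mem_prod ha hb⟩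
    (f := fun p : F × F => ‖p.1 - p.2‖ + σ * (‖p.1 - a‖ + ‖p.2 - b‖))
    (by fun_prop)
  refine ⟨a₁, ha₁, b₁, hb₁, by simpa using hmin (Set.mk_mem_prod ha hb), fun a' ha' b' hb' => ?_⟩
  have hle : ‖a₁ - b₁‖ + σ * (‖a₁ - a‖ + ‖b₁ - b‖) ≤ ‖a' - b'‖ + σ * (‖a' - a‖ + ‖b' - b‖) :=
    hmin (Set.mk_mem_prod ha' hb')
  have ha := norm_sub_le_norm_sub_add_norm_sub a' a₁ a
  have hb := norm_sub_le_norm_sub_add_norm_sub b' b₁ b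
  nlinarith

/-- The transversality clause of `Assumption3At`, for `A = ∂K` and `B = C`. -/
def ConeTransversalAt (A B : Set E) (x : E) : Prop :=
  ∃ N ∈ 𝓝 x, ∃ c > 0, ∃ α ∈ Ico (0:ℝ) 1,
    ∀ x₁ ∈ (A \ B) ∩ N, ∀ x₂ ∈ (frontier B \ A) ∩ N,
      ∃ v₁ ∈ contingentCone A x₁, ∃ v₂ ∈ contingentCone B x₂,
        pairNorm v₁ v₂ ≤ c * ‖x₁ - x₂‖ ∧ ‖(x₂ - x₁) - (v₁ - v₂)‖ ≤ α * ‖x₁ - x₂‖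

lemma exists_penalty_constant {c α : ℝ} (hc : 0 < c) (hα : α < 1) :
    ∃ σ > 0, σ ≤ 1 / 2 ∧ 2 * σ * c < 1 - α := by
  refine ⟨min (1 / 2) ((1 - α) / (4 * c)), lt_min (by norm_num) (by
    have : 0 < 1 - α := by linarith
    positivity), min_le_left _ _, ?_⟩
  have : min (1 / 2) ((1 - α) / (4 * c)) * c ≤ (1 - α) / 4 := calc
    _ ≤ (1 - α) / (4 * c) * c := mul_le_mul_of_nonneg_right (min_le_right _ _) hc.le
    _ = (1 - α) / 4 := by field_simp
  linarith

theorem ConeTransversalAt.linearlyRegularAt [ProperSpace E] {A B : Set E} {x : E}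
    (hA : IsClosed A) (hB : IsClosed B) (h : ConeTransversalAt A B x) :
    LinearlyRegularAt A B x := by
  obtain ⟨N, hN, c, hc, α, ⟨-, hα1⟩, htr⟩ := h
  obtain ⟨R, hR, hRN⟩ := Metric.nhds_basis_closedBall.mem_iff.1 hN
  obtain ⟨σ, hσ0, hσ_half, hσc⟩ := exists_penalty_constant hc hα1
  set r := σ * R / 4 with hr_def
  have hr : 0 < r := by positivity
  have hrR : r ≤ R / 8 := by nlinarith
  refine ⟨σ⁻¹, mem_of_superset (prod_mem_nhds (Metric.ball_mem_nhds x hr)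
    (Metric.ball_mem_nhds x hr)) ?_⟩
  rintro ⟨a, b⟩ ⟨har, hbr⟩ ha hb
  dsimp only at har hbr ha hb ⊢
  rw [Metric.mem_ball, dist_eq_norm] at har hbr
  have hball : ∀ y, ‖y - x‖ < R → y ∈ Metric.closedBall x R := fun y hy =>
    Metric.mem_closedBall.2 (dist_eq_norm y x ▸ hy.le)
  obtain ⟨a₁, ⟨ha₁, -⟩, b₁, ⟨hb₁, -⟩, hmove, hmin⟩ :=
    exists_ekeland_pair_of_isCompact hA hB (isCompact_closedBall x R) hσ0.le
      ⟨ha, hball a (by linarith)⟩ ⟨hb, hball b (by linarith)⟩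
  have hab : ‖a - b‖ < 2 * r := by
    have := norm_sub_le_norm_sub_add_norm_sub a x b
    rw [norm_sub_rev x b] at this
    linarith
  have hmoved : ‖a₁ - a‖ + ‖b₁ - b‖ < R / 2 := by
    refine lt_of_mul_lt_mul_left ?_ hσ0.le
    linarith [norm_nonneg (a₁ - b₁)]
  have hnhds : ∀ y y', ‖y - y'‖ < R / 2 → ‖y' - x‖ < r → Metric.closedBall x R ∈ 𝓝 y :=
    fun y y' hy hy' => mem_of_superset (Metric.isOpen_ball.mem_nhds (x := y) (by
      rw [Metric.mem_ball, dist_eq_norm]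
      linarith [norm_sub_le_norm_sub_add_norm_sub y y' x])) Metric.ball_subset_closedBall
  have hpair : IsEkelandPair A B (Metric.closedBall x R) σ a₁ b₁ :=
    ⟨ha₁, hb₁, hnhds a₁ a (by linarith [norm_nonneg (b₁ - b)]) har,
      hnhds b₁ b (by linarith [norm_nonneg (a₁ - a)]) hbr, hmin⟩
  obtain rfl : a₁ = b₁ := hpair.eq_of_transversal hσ0.le (by linarith) hσc fun ha hb =>
    htr a₁ ⟨ha, hRN (mem_of_mem_nhds hpair.nhds_fst)⟩ b₁ ⟨hb, hRN (mem_of_mem_nhds hpair.nhds_snd)⟩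
  refine ⟨a₁, ⟨ha₁, hb₁⟩, ?_⟩
  rw [sub_self, norm_zero, zero_add] at hmove
  rw [inv_mul_eq_div, le_div_iff₀ hσ0]
  nlinarith [mul_nonneg hσ0.le (norm_nonneg (a₁ - b))]

theorem cone_intersection_boundary_constraint_general {n : ℕ} (K C : Set (Euc n))
    (hC : IsClosed C)
    (x : Euc n) (hx : x ∈ frontier K ∩ frontier C)
    (h3 : Assumption3At K C x) :
    adjacentCone (frontier K ∩ C) x = contingentCone (frontier K ∩ C) x ∧
      contingentCone (frontier K ∩ C) x =
        contingentCone (frontier K) x ∩ contingentCone C x := by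
  obtain ⟨hKa, hCa, htr⟩ := h3
  have hreg : LinearlyRegularAt (frontier K) C x :=
    ConeTransversalAt.linearlyRegularAt isClosed_frontier hC htr
  have hsup : contingentCone (frontier K) x ∩ contingentCone C x ⊆
      adjacentCone (frontier K ∩ C) x := by
    rw [hKa, hCa]
    exact hreg.inter_adjacentCone_subset ⟨hx.1, hC.frontier_subset hx.2⟩
  have hsub : contingentCone (frontier K ∩ C) x ⊆
      contingentCone (frontier K) x ∩ contingentCone C x :=
    subset_inter (contingentCone_mono inter_subset_left x)
      (contingentCone_mono inter_subset_right x)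
  exact ⟨(adjacentCone_subset_contingentCone _ _).antisymm (hsub.trans hsup),
    hsub.antisymm (hsup.trans (adjacentCone_subset_contingentCone _ _))⟩

/-- Under Assumption 3 at `x ∈ ∂K ∩ ∂C`,
`T^a_{∂K ∩ C}(x) = T_{∂K ∩ C}(x) = T_{∂K}(x) ∩ T_C(x)`. -/
theorem cone_intersection_boundary_constraint {n : ℕ} (K C : Set (Euc n))
    (hK : IsClosed K) (hC : IsClosed C)
    (x : Euc n) (hx : x ∈ frontier K ∩ frontier C)
    (h3 : Assumption3At K C x) :
    adjacentCone (frontier K ∩ C) x = contingentCone (frontier K ∩ C) x ∧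
      contingentCone (frontier K ∩ C) x =
        contingentCone (frontier K) x ∩ contingentCone C x :=
  cone_intersection_boundary_constraint_general K C hC x hx h3
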